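/- arXiv:1202.5714 — 4 statements merged into one kernel-verified Lean document; each statement's English description precedes it below -/
import Mathlib

section
/- Let a group G act by isometries on a metric space K, and let H = {h_1,...,h_d} be a finite subset of G. Let P be a finite set of points of K all lying in a single G-orbit, with elements p_1,...,p_r, and choose g_i ∈ G with g_i · p_1 = p_i. Suppose each h_t moves each p_i a distance at most a, and suppose every ball of radius a around a point of K contains at most C_2 points of K (K is a discrete metric space with this uniform bound). Then there exists a subset I of {1,...,r} of cardinality at least r / C_2^d and points v_1,...,v_d in the ball of radius a around p_1 such that h_t · p_i = g_i · v_t for all t ∈ {1,...,d} and all i ∈ I. -/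
/-!
The map `i ↦ (t ↦ g_i⁻¹ h_t • p_i)` sends each index into `B^d`, where `B` is the ball of radius
`a` around `p_1`: translating by the isometry `g_i⁻¹` carries the estimate
`dist (p_i) (h_t • p_i) ≤ a` to `dist p_1 (g_i⁻¹ h_t • p_i) ≤ a`. Since `B^d` has at most `C_2^d`
elements, the pigeonhole principle gives a fibre `I` of size at least `r / C_2^d`, and its common
value `v` satisfies `h_t • p_i = g_i • v_t` for `i ∈ I`.
-/

open Finset Fintype

namespace Finset

variable {α β M : Type*} [DecidableEq β] [Field M] [LinearOrder M] [IsStrictOrderedRing M]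

theorem exists_div_le_card_fiber_of_maps_to {s : Finset α} {t : Finset β} {f : α → β} {N : ℕ}
    (hf : ∀ a ∈ s, f a ∈ t) (hs : s.Nonempty) (ht : #t ≤ N) :
    ∃ y ∈ t, (#s : M) / N ≤ #{x ∈ s | f x = y} := by
  obtain ⟨a, ha⟩ := hs
  refine exists_le_card_fiber_of_nsmul_le_card_of_maps_to hf ⟨f a, hf a ha⟩ ?_
  rw [nsmul_eq_mul]
  rcases (Nat.cast_nonneg N : (0 : M) ≤ N).eq_or_lt with hN | hN
  · rw [← hN, div_zero, mul_zero]
    positivity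
  · calc (#t : M) * (#s / N) ≤ N * (#s / N) := by gcongr
      _ = #s := mul_div_cancel₀ _ hN.ne'

theorem exists_div_pow_le_card_fiber_piFinset {ι : Type*} [DecidableEq ι] [Fintype ι]
    {s : Finset α} {S : Finset β} {C : ℕ} {F : α → ι → β}
    (hF : ∀ a ∈ s, ∀ i, F a i ∈ S) (hs : s.Nonempty) (hS : #S ≤ C) :
    ∃ v ∈ piFinset fun _ ↦ S, (#s : M) / C ^ Fintype.card ι ≤ #{a ∈ s | F a = v} := by
  have hcard : #(piFinset fun _ : ι ↦ S) ≤ C ^ Fintype.card ι := by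
    rw [card_piFinset, prod_const, card_univ]
    exact Nat.pow_le_pow_left hS _
  simpa using exists_div_le_card_fiber_of_maps_to (M := M)
    (fun a ha ↦ mem_piFinset.2 (hF a ha)) hs hcard

end Finset

theorem dist_inv_smul_smul_le_of_smul_eq {G K : Type*} [Group G] [PseudoMetricSpace K]
    [MulAction G K] [IsIsometricSMul G K] {g h : G} {x y : K} {a : ℝ}
    (hxy : g • x = y) (hy : dist y (h • y) ≤ a) : dist x (g⁻¹ • h • y) ≤ a := by
  rwa [← dist_smul g, smul_inv_smul, hxy]

theorem stmt0 {G K : Type*} [Group G] [MetricSpace K] [MulAction G K]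
    (hiso : ∀ (g : G) (x y : K), dist (g • x) (g • y) = dist x y)
    (d r : ℕ) (hr : 0 < r) (a : ℝ) (C₂ : ℕ)
    (h : Fin d → G) (p : Fin r → K) (g : Fin r → G)
    (hg : ∀ i, g i • p ⟨0, hr⟩ = p i)
    (hmove : ∀ (t : Fin d) (i : Fin r), dist (p i) (h t • p i) ≤ a)
    (hball : ∀ q : K, ({x : K | dist q x ≤ a}).Finite ∧ ({x : K | dist q x ≤ a}).ncard ≤ C₂) :
    ∃ (I : Finset (Fin r)) (v : Fin d → K),
      (r : ℝ) / C₂ ^ d ≤ I.card ∧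
      (∀ t, dist (p ⟨0, hr⟩) (v t) ≤ a) ∧
      ∀ t : Fin d, ∀ i ∈ I, h t • p i = g i • v t := by
  classical
  have : IsIsometricSMul G K := ⟨fun c ↦ Isometry.of_dist_eq (hiso c)⟩
  obtain ⟨hfin, hcard⟩ := hball (p ⟨0, hr⟩)
  have hF : ∀ i ∈ (univ : Finset (Fin r)), ∀ t, (g i)⁻¹ • h t • p i ∈ hfin.toFinset :=
    fun i _ t ↦ hfin.mem_toFinset.2 (dist_inv_smul_smul_le_of_smul_eq (hg i) (hmove t i))
  obtain ⟨v, hv, hI⟩ := exists_div_pow_le_card_fiber_piFinset (M := ℝ) (C := C₂)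
    hF (univ_nonempty_iff.2 ⟨⟨0, hr⟩⟩) (Set.ncard_eq_toFinset_card _ hfin ▸ hcard)
  refine ⟨{i ∈ (univ : Finset (Fin r)) | (fun t ↦ (g i)⁻¹ • h t • p i) = v}, v,
    by simpa using hI, fun t ↦ hfin.mem_toFinset.1 (mem_piFinset.1 hv t), fun t i hi ↦ ?_⟩
  rw [← (mem_filter.1 hi).2, smul_inv_smul]
end

section
/- Let G be a group acting on a set X, H a subgroup, p ∈ X a point with trivial stabilizer (i.e., g · p = p implies g = 1). Suppose g_1, ..., g_r ∈ G and for each h ∈ H there exists v_h ∈ X with h · (g_i · p) = g_i · v_h for all 1 ≤ i ≤ r. Then for all i, j ∈ {1,...,r} and all h ∈ H, the element g_j · g_i⁻¹ commutes with h; in particular each g_j · g_i⁻¹ lies in the centralizer of H in G. -/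
/-! If `h • (x • p) = x • v` and `h • (y • p) = y • v`, then `x⁻¹ h x` and `y⁻¹ h y` both send
`p` to `v`; since `p` has trivial stabilizer they are equal, which says exactly that `y x⁻¹`
commutes with `h`. -/

section

variable {G X : Type*} [Group G] [MulAction G X] {p : X}

theorem smul_left_injective_of_forall_smul_eq_self (hfree : ∀ g : G, g • p = p → g = 1) :
    Function.Injective (· • p : G → X) := by
  intro a b hab
  have hfix : (b⁻¹ * a) • p = p := by
    rw [mul_smul, inv_smul_eq_iff]
    exact hab
  exact (inv_mul_eq_one.mp (hfree _ hfix)).symm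

theorem inv_mul_mul_eq_of_smul_smul_eq (hfree : ∀ g : G, g • p = p → g = 1)
    {a x y : G} {v : X} (hx : a • x • p = x • v) (hy : a • y • p = y • v) :
    x⁻¹ * a * x = y⁻¹ * a * y :=
  smul_left_injective_of_forall_smul_eq_self hfree <| by
    simp only [mul_smul, hx, hy, inv_smul_smul]

end

theorem commute_mul_inv_of_inv_mul_mul_eq {G : Type*} [Group G] {a x y : G}
    (h : x⁻¹ * a * x = y⁻¹ * a * y) : Commute (y * x⁻¹) a :=
  calc y * x⁻¹ * a
      = y * (x⁻¹ * a * x) * x⁻¹ := by group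
    _ = y * (y⁻¹ * a * y) * x⁻¹ := by rw [h]
    _ = a * (y * x⁻¹) := by group

theorem stmt2 {G X : Type*} [Group G] [MulAction G X]
    (H : Subgroup G) (p : X) (hfree : ∀ g : G, g • p = p → g = 1)
    (r : ℕ) (g : Fin r → G) (v : G → X)
    (hv : ∀ h ∈ H, ∀ i : Fin r, h • (g i • p) = g i • v h) :
    ∀ i j : Fin r, (∀ h ∈ H, (g j * (g i)⁻¹) * h = h * (g j * (g i)⁻¹)) ∧
      g j * (g i)⁻¹ ∈ Subgroup.centralizer (H : Set G) := by
  intro i j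
  have hcomm : ∀ h ∈ H, Commute (g j * (g i)⁻¹) h := fun h hh =>
    commute_mul_inv_of_inv_mul_mul_eq <|
      inv_mul_mul_eq_of_smul_smul_eq hfree (hv h hh i) (hv h hh j)
  exact ⟨fun h hh => (hcomm h hh).eq,
    Subgroup.mem_centralizer_iff.mpr fun h hh => (hcomm h hh).symm.eq⟩
end

section
/- Let K be a δ-hyperbolic geodesic metric space (all geodesic triangles are δ-thin), let G be a group acting on K by isometries, and let H be a finite subgroup of G. Suppose x, y ∈ K satisfy diam(H · x) ≤ 6δ, diam(H · y) ≤ 6δ, and d(x,y) ≥ 20δ. Then for any point z on a geodesic [x,y] with d(x,z) ≥ 6δ + 1 and d(z,y) ≥ 6δ + 1, and any h ∈ H, one has d(z, h · z) ≤ 8δ. -/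
/-- A geodesic from `x` to `y`, parametrized by arclength on `[0, dist x y]`. -/
def IsGeodesic {K : Type*} [MetricSpace K] (x y : K) (γ : ℝ → K) : Prop :=
  γ 0 = x ∧ γ (dist x y) = y ∧
    ∀ s ∈ Set.Icc (0 : ℝ) (dist x y), ∀ t ∈ Set.Icc (0 : ℝ) (dist x y),
      dist (γ s) (γ t) = |s - t|

/-!
Apply thinness to the triangle `x, h • z, y` whose side `[x, y]` passes through `z`: some point `u`
of `[x, h • z] ∪ [h • z, y]` lies within `δ` of `z`. If `u` is on a geodesic `[a, b]`, then
`d(a, z) + d(z, b) ≤ d(a, b) + 2δ`. Since `h` moves `x` and `y` by at most `6δ`, the points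
`h • z` and `z` have nearly the same distances to `x` and `y`, and either case gives
`d(z, h • z) ≤ 8δ`.
-/

namespace IsGeodesic

variable {K : Type*} [MetricSpace K] {x y : K} {γ : ℝ → K} {t : ℝ}

lemma dist_apply_left (hγ : IsGeodesic x y γ) (ht : t ∈ Set.Icc 0 (dist x y)) :
    dist x (γ t) = t := by
  rw [← hγ.1, hγ.2.2 0 ⟨le_rfl, dist_nonneg⟩ t ht, zero_sub, abs_neg, abs_of_nonneg ht.1]

lemma dist_apply_right (hγ : IsGeodesic x y γ) (ht : t ∈ Set.Icc 0 (dist x y)) :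
    dist (γ t) y = dist x y - t := by
  conv_lhs => rw [← hγ.2.1]
  rw [hγ.2.2 t ht _ ⟨dist_nonneg, le_rfl⟩, abs_of_nonpos (sub_nonpos.2 ht.2), neg_sub]

lemma dist_add_dist_le (hγ : IsGeodesic x y γ) (ht : t ∈ Set.Icc 0 (dist x y)) (z : K) :
    dist x z + dist z y ≤ dist x y + 2 * dist z (γ t) := by
  have hx := dist_triangle x (γ t) z
  have hy := dist_triangle z (γ t) y
  rw [hγ.dist_apply_left ht, dist_comm (γ t) z] at hx
  rw [hγ.dist_apply_right ht] at hy
  linarith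

end IsGeodesic

lemma dist_smul_le_dist_smul_add_dist {G K : Type*} [SMul G K] [PseudoMetricSpace K] {g : G}
    (hg : ∀ a b : K, dist (g • a) (g • b) = dist a b) (a b : K) :
    dist a (g • b) ≤ dist a (g • a) + dist a b :=
  hg a b ▸ dist_triangle a (g • a) (g • b)

theorem stmt4_general {G K : Type*} [Group G] [MetricSpace K] [MulAction G K] (δ : ℝ)
    (geod : ∀ a b : K, ∃ γ : ℝ → K, IsGeodesic a b γ)
    (thin : ∀ (a b c : K) (γab γbc γac : ℝ → K), IsGeodesic a b γab →
      IsGeodesic b c γbc → IsGeodesic a c γac →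
      ∀ s ∈ Set.Icc (0 : ℝ) (dist a c),
        ∃ u ∈ γab '' Set.Icc (0 : ℝ) (dist a b) ∪ γbc '' Set.Icc (0 : ℝ) (dist b c),
          dist (γac s) u ≤ δ)
    (hiso : ∀ (g : G) (x y : K), dist (g • x) (g • y) = dist x y)
    (H : Subgroup G) (x y : K)
    (hx : ∀ h ∈ H, ∀ h' ∈ H, dist (h • x) (h' • x) ≤ 6 * δ)
    (hy : ∀ h ∈ H, ∀ h' ∈ H, dist (h • y) (h' • y) ≤ 6 * δ)
    (γ : ℝ → K) (hγ : IsGeodesic x y γ)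
    (s : ℝ) (hs : s ∈ Set.Icc (0 : ℝ) (dist x y)) (z : K) (hz : z = γ s) :
    ∀ h ∈ H, dist z (h • z) ≤ 8 * δ := by
  intro h hh
  subst hz
  have hxz := hγ.dist_apply_left hs
  have hzy := hγ.dist_apply_right hs
  have hhx : dist x (h • x) ≤ 6 * δ := by simpa using hx 1 H.one_mem h hh
  have hhy : dist y (h • y) ≤ 6 * δ := by simpa using hy 1 H.one_mem h hh
  have hx_hz := dist_smul_le_dist_smul_add_dist (hiso h) x (γ s)
  have hy_hz := dist_smul_le_dist_smul_add_dist (hiso h) y (γ s)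
  rw [dist_comm y (h • γ s), dist_comm y (γ s)] at hy_hz
  obtain ⟨α, hα⟩ := geod x (h • γ s)
  obtain ⟨β, hβ⟩ := geod (h • γ s) y
  obtain ⟨u, hu, hzu⟩ := thin x (h • γ s) y α β γ hα hβ hγ s hs
  rcases hu with ⟨r, hr, rfl⟩ | ⟨r, hr, rfl⟩
  · linarith [hα.dist_add_dist_le hr (γ s)]
  · linarith [hβ.dist_add_dist_le hr (γ s), dist_comm (h • γ s) (γ s)]

theorem stmt4 {G K : Type*} [Group G] [MetricSpace K] [MulAction G K] (δ : ℝ)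
    (geod : ∀ a b : K, ∃ γ : ℝ → K, IsGeodesic a b γ)
    (thin : ∀ (a b c : K) (γab γbc γac : ℝ → K), IsGeodesic a b γab →
      IsGeodesic b c γbc → IsGeodesic a c γac →
      ∀ s ∈ Set.Icc (0 : ℝ) (dist a c),
        ∃ u ∈ γab '' Set.Icc (0 : ℝ) (dist a b) ∪ γbc '' Set.Icc (0 : ℝ) (dist b c),
          dist (γac s) u ≤ δ)
    (hiso : ∀ (g : G) (x y : K), dist (g • x) (g • y) = dist x y)
    (H : Subgroup G) [Finite H] (x y : K)
    (hx : ∀ h ∈ H, ∀ h' ∈ H, dist (h • x) (h' • x) ≤ 6 * δ)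
    (hy : ∀ h ∈ H, ∀ h' ∈ H, dist (h • y) (h' • y) ≤ 6 * δ)
    (hxy : 20 * δ ≤ dist x y)
    (γ : ℝ → K) (hγ : IsGeodesic x y γ)
    (s : ℝ) (hs : s ∈ Set.Icc (0 : ℝ) (dist x y)) (z : K) (hz : z = γ s)
    (hzx : 6 * δ + 1 ≤ dist x z) (hzy : 6 * δ + 1 ≤ dist z y) :
    ∀ h ∈ H, dist z (h • z) ≤ 8 * δ :=
  stmt4_general δ geod thin hiso H x y hx hy γ hγ s hs z hz
end

section
/- Let G be a hyperbolic group with Cayley graph K_G (with respect to a finite generating set) having hyperbolicity constant δ, and let H be a finite subgroup of G. Let X_H = {x ∈ K_G : diam(H·x) ≤ 6δ} where H acts by left multiplication. There exists a constant D, depending only on δ and the number of generators, such that if diam(X_H) ≥ D then the centralizer of H in G is infinite. -/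
/-- Word length of `g` with respect to the generators `gen` (and their inverses). -/
noncomputable def wordLength {G : Type} [Group G] {n : ℕ} (gen : Fin n → G) (g : G) : ℕ :=
  sInf {k : ℕ | ∃ w : Fin k → G,
    (∀ i, w i ∈ Set.range gen ∪ (Set.range gen)⁻¹) ∧ (List.ofFn w).prod = g}

section Geometry

variable {K : Type*} [MetricSpace K]

noncomputable def gromovProduct (w x y : K) : ℝ :=
  (dist w x + dist w y - dist x y) / 2

lemma gromovProduct_nonneg (w x y : K) : 0 ≤ gromovProduct w x y := by
  unfold gromovProduct
  linarith [dist_triangle_left x y w]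

lemma gromovProduct_comm (w x y : K) : gromovProduct w x y = gromovProduct w y x := by
  unfold gromovProduct
  rw [dist_comm x y]
  ring

lemma gromovProduct_le_dist (w x y : K) : gromovProduct w x y ≤ dist w y := by
  unfold gromovProduct
  linarith [dist_triangle w y x, dist_comm x y]

lemma gromovProduct_add_gromovProduct (w x y : K) :
    gromovProduct w x y + gromovProduct x w y = dist w x := by
  unfold gromovProduct
  rw [dist_comm x w]
  ring

lemma gromovProduct_smul {G : Type*} [SMul G K] [IsIsometricSMul G K] (g : G) (w x y : K) :
    gromovProduct (g • w) (g • x) (g • y) = gromovProduct w x y := by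
  simp only [gromovProduct, dist_smul]

lemma dist_smul_le_dist_smul_add {G : Type*} [SMul G K] [IsIsometricSMul G K] (g : G)
    (x y : K) : dist (g • y) y ≤ dist (g • x) x + 2 * dist x y := by
  linarith [dist_triangle4 (g • y) (g • x) x y, dist_smul g y x, dist_comm y x]

def IsGeodesicSpace (K : Type*) [MetricSpace K] : Prop :=
  ∀ a b : K, ∃ γ : ℝ → K, IsGeodesic a b γ

def HasSlimTriangles (δ : ℝ) (K : Type*) [MetricSpace K] : Prop :=
  ∀ (a b c : K) (γab γbc γac : ℝ → K), IsGeodesic a b γab → IsGeodesic b c γbc →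
    IsGeodesic a c γac → ∀ s ∈ Set.Icc (0 : ℝ) (dist a c),
      ∃ u ∈ γab '' Set.Icc (0 : ℝ) (dist a b) ∪ γbc '' Set.Icc (0 : ℝ) (dist b c),
        dist (γac s) u ≤ δ

def IsGromovHyperbolic (δ : ℝ) (K : Type*) [MetricSpace K] : Prop :=
  ∀ w x y z : K, min (gromovProduct w x y) (gromovProduct w y z) - δ ≤ gromovProduct w x z

namespace IsGeodesic

variable {a b : K} {γ : ℝ → K}

lemma dist_eq (hγ : IsGeodesic a b γ) {s t : ℝ} (hs : s ∈ Set.Icc 0 (dist a b))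
    (ht : t ∈ Set.Icc 0 (dist a b)) : dist (γ s) (γ t) = |s - t| :=
  hγ.2.2 s hs t ht

lemma dist_left (hγ : IsGeodesic a b γ) {t : ℝ} (ht : t ∈ Set.Icc 0 (dist a b)) :
    dist a (γ t) = t := by
  rw [← hγ.1, hγ.dist_eq ⟨le_rfl, dist_nonneg⟩ ht, zero_sub, abs_neg, abs_of_nonneg ht.1]

lemma dist_right (hγ : IsGeodesic a b γ) {t : ℝ} (ht : t ∈ Set.Icc 0 (dist a b)) :
    dist b (γ t) = dist a b - t := by
  conv_lhs => rw [← hγ.2.1]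
  rw [hγ.dist_eq ⟨dist_nonneg, le_rfl⟩ ht, abs_of_nonneg (sub_nonneg.2 ht.2)]

lemma abs_dist_sub_le_one (hγ : IsGeodesic a b γ) {y : ℕ → K}
    (hy : ∀ k : ℕ, dist (γ k) (y k) ≤ 1 / 2) {N : ℕ} (hN : N ≤ dist a b) {p q : ℕ}
    (hpq : p ≤ q) (hq : q ≤ N) : |dist (y p) (y q) - (q - p : ℝ)| ≤ 1 := by
  have hIcc {k : ℕ} (hk : k ≤ N) : (k : ℝ) ∈ Set.Icc 0 (dist a b) :=
    ⟨k.cast_nonneg, le_trans (by exact_mod_cast hk) hN⟩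
  have hqp : |(p : ℝ) - q| = q - p := by
    rw [abs_sub_comm, abs_of_nonneg (sub_nonneg.2 (by exact_mod_cast hpq))]
  rw [← hqp, ← hγ.dist_eq (hIcc (hpq.trans hq)) (hIcc hq), ← Real.dist_eq]
  linarith [dist_dist_dist_le (y p) (y q) (γ p) (γ q), hy p, hy q, dist_comm (γ p) (y p),
    dist_comm (γ q) (y q)]

end IsGeodesic

namespace HasSlimTriangles

variable {δ : ℝ}

theorem dist_geodesic_le (hK : IsGeodesicSpace K) (hδ : HasSlimTriangles δ K) {a b c : K}
    {γ : ℝ → K} (hγ : IsGeodesic a c γ) {ρ : ℝ} (hρ₀ : 0 ≤ ρ) (hρ : ρ ≤ gromovProduct a b c) :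
    dist b (γ ρ) ≤ dist a b - ρ + 2 * δ := by
  obtain ⟨γab, hab⟩ := hK a b
  obtain ⟨γbc, hbc⟩ := hK b c
  have hρ' : ρ ∈ Set.Icc 0 (dist a c) := ⟨hρ₀, hρ.trans (gromovProduct_le_dist a b c)⟩
  obtain ⟨u, hu, hγu⟩ := hδ a b c γab γbc γ hab hbc hγ ρ hρ'
  have hbu := dist_triangle b u (γ ρ)
  rw [dist_comm] at hγu
  rcases hu with ⟨r, hr, rfl⟩ | ⟨r, hr, rfl⟩
  · have har := dist_triangle a (γab r) (γ ρ)
    rw [hab.dist_left hr, hγ.dist_left hρ'] at har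
    rw [hab.dist_right hr] at hbu
    linarith
  · have hcr := dist_triangle c (γbc r) (γ ρ)
    rw [hbc.dist_right hr, hγ.dist_right hρ'] at hcr
    rw [hbc.dist_left hr] at hbu
    unfold gromovProduct at hρ
    linarith

theorem isGromovHyperbolic (hK : IsGeodesicSpace K) (hδ : HasSlimTriangles δ K) :
    IsGromovHyperbolic (2 * δ) K := by
  intro w x y z
  obtain ⟨γ, hγ⟩ := hK w y
  set ρ := min (gromovProduct w x y) (gromovProduct w y z)
  have hρ₀ : 0 ≤ ρ := le_min (gromovProduct_nonneg w x y) (gromovProduct_nonneg w y z)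
  have hx := hδ.dist_geodesic_le hK hγ hρ₀ (min_le_left _ _)
  have hz := hδ.dist_geodesic_le hK hγ (b := z) hρ₀
    ((min_le_right _ _).trans_eq (gromovProduct_comm w y z))
  unfold gromovProduct
  linarith [dist_triangle_right x z (γ ρ)]

theorem dist_geodesic_le_of_dist_le (hK : IsGeodesicSpace K) (hδ : HasSlimTriangles δ K)
    {a b : K} {γ : ℝ → K} (hγ : IsGeodesic a b γ) {t ε : ℝ} (ht : t ∈ Set.Icc 0 (dist a b))
    {p : K} (hpa : dist a p ≤ t + ε) (hpb : dist b p ≤ dist a b - t + ε) :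
    dist p (γ t) ≤ 2 * ε + 2 * δ := by
  set ρ := gromovProduct a p b
  have hρ : ρ ∈ Set.Icc 0 (dist a b) := ⟨gromovProduct_nonneg a p b, gromovProduct_le_dist a p b⟩
  have hpρ := hδ.dist_geodesic_le hK hγ hρ.1 le_rfl
  have hpρ' : dist a p - ρ ≤ ε := by
    unfold ρ gromovProduct
    linarith [dist_comm b p]
  have hρt : |ρ - t| ≤ ε := by
    rw [abs_le]
    unfold ρ gromovProduct
    constructor <;> linarith [dist_triangle a p b, dist_comm b p]
  calc dist p (γ t) ≤ dist p (γ ρ) + dist (γ ρ) (γ t) := dist_triangle _ _ _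
    _ ≤ 2 * ε + 2 * δ := by
      rw [hγ.dist_eq hρ ht]
      linarith

theorem dist_smul_geodesic_le (hK : IsGeodesicSpace K) (hδ : HasSlimTriangles δ K)
    {G : Type*} [SMul G K] [IsIsometricSMul G K] {a b : K} {γ : ℝ → K} (hγ : IsGeodesic a b γ)
    {t : ℝ} (ht : t ∈ Set.Icc 0 (dist a b)) {g : G} {ε : ℝ} (ha : dist (g • a) a ≤ ε)
    (hb : dist (g • b) b ≤ ε) : dist (g • γ t) (γ t) ≤ 2 * ε + 2 * δ :=
  hδ.dist_geodesic_le_of_dist_le hK hγ ht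
    (by linarith [dist_triangle_left a (g • γ t) (g • a), dist_smul g a (γ t), hγ.dist_left ht])
    (by linarith [dist_triangle_left b (g • γ t) (g • b), dist_smul g b (γ t), hγ.dist_right ht])

end HasSlimTriangles

namespace IsGromovHyperbolic

variable {δ : ℝ}

theorem nonneg (hK : IsGromovHyperbolic δ K) (x : K) : 0 ≤ δ := by
  have := hK x x x x
  simp only [gromovProduct, dist_self, min_self] at this
  linarith

theorem mul_le_dist (hK : IsGromovHyperbolic δ K) {p : ℕ → K} {c t : ℝ}
    (hd : ∀ i, dist (p i) (p (i + 1)) = t)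
    (hc : ∀ i, gromovProduct (p (i + 1)) (p i) (p (i + 2)) ≤ c) (ht : 2 * c + 2 * δ < t)
    (m : ℕ) : m * (t - 2 * c - 2 * δ) ≤ dist (p 0) (p m) := by
  have hδ := hK.nonneg (p 0)
  suffices h : ∀ m : ℕ, gromovProduct (p m) (p 0) (p (m + 1)) ≤ c + δ ∧
      m * (t - 2 * c - 2 * δ) ≤ dist (p 0) (p m) from (h m).2
  intro m
  induction m with
  | zero =>
    refine ⟨?_, by simp⟩
    simp only [gromovProduct, dist_self, zero_add]
    linarith [gromovProduct_nonneg (p 1) (p 0) (p 2), hc 0]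
  | succ m ih =>
    obtain ⟨hgp, hdist⟩ := ih
    constructor
    · have hback := gromovProduct_add_gromovProduct (p (m + 1)) (p m) (p 0)
      rw [gromovProduct_comm (p m), dist_comm, hd m] at hback
      have hnext : gromovProduct (p (m + 1)) (p m) (p (m + 1 + 1)) ≤ c := hc m
      by_contra! hlt
      have hfar : c + δ < gromovProduct (p (m + 1)) (p m) (p 0) := by linarith
      linarith [hK (p (m + 1)) (p m) (p 0) (p (m + 1 + 1)), lt_min hfar hlt]
    · have hstep : dist (p 0) (p (m + 1)) =
          dist (p 0) (p m) + t - 2 * gromovProduct (p m) (p 0) (p (m + 1)) := by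
        unfold gromovProduct
        rw [dist_comm (p m) (p 0), hd m]
        ring
      push_cast
      linarith

theorem not_isOfFinOrder (hK : IsGromovHyperbolic δ K) {G : Type*} [Group G] [MulAction G K]
    [IsIsometricSMul G K] {g : G} {x : K} {c : ℝ} (hc : gromovProduct x (g⁻¹ • x) (g • x) ≤ c)
    (ht : 2 * c + 2 * δ < dist x (g • x)) : ¬IsOfFinOrder g := by
  intro hg
  obtain ⟨m, hm, hgm⟩ := isOfFinOrder_iff_pow_eq_one.1 hg
  have hd (i : ℕ) : dist (g ^ i • x) (g ^ (i + 1) • x) = dist x (g • x) := by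
    rw [pow_succ, mul_smul, dist_smul]
  have hgp (i : ℕ) : gromovProduct (g ^ (i + 1) • x) (g ^ i • x) (g ^ (i + 2) • x) ≤ c := by
    rwa [show g ^ i • x = g ^ (i + 1) • g⁻¹ • x by rw [smul_smul, pow_succ, mul_inv_cancel_right],
      show g ^ (i + 2) • x = g ^ (i + 1) • g • x by rw [smul_smul, ← pow_succ], gromovProduct_smul]
  have hgrowth := hK.mul_le_dist (p := fun i => g ^ i • x) hd hgp ht m
  simp only [pow_zero, one_smul, hgm, dist_self] at hgrowth
  nlinarith [show (0 : ℝ) < m by exact_mod_cast hm]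

/-- The hypotheses place `w, a, x, u` roughly in this order on a line, `x` near the midpoint of
`w` and `u`: the four-point condition at `a` turns `(w|x)_a ≈ 0` and `(u|x)_a ≈ s` into a bound on
`(w|u)_a`, hence a lower bound on `dist w u`. -/
theorem gromovProduct_le_of_abs_dist_sub_le (hK : IsGromovHyperbolic δ K) {a x w u : K}
    {s t : ℝ} (hs : δ + 3 < s) (hax : |dist a x - s| ≤ 1) (hxw : |dist x w - t| ≤ 1)
    (hxu : |dist x u - t| ≤ 1) (haw : |dist a w - (t - s)| ≤ 1)
    (hau : |dist a u - (t + s)| ≤ 1) : gromovProduct x w u ≤ δ + 7 / 2 := by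
  rw [abs_le] at hax hxw hxu haw hau
  have hwx : gromovProduct a w x ≤ 3 / 2 := by
    unfold gromovProduct
    linarith [dist_comm w x]
  have hux : δ + 3 / 2 < gromovProduct a u x := by
    unfold gromovProduct
    linarith [dist_comm u x]
  have hwu : gromovProduct a w u ≤ δ + 3 / 2 := by
    by_contra! hlt
    linarith [hK a w u x, lt_min hlt hux]
  unfold gromovProduct at hwu ⊢
  linarith

theorem not_isOfFinOrder_of_smul_eq (hK : IsGromovHyperbolic δ K) {G : Type*} [Group G]
    [MulAction G K] [IsIsometricSMul G K] {y : ℕ → K} {N : ℕ}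
    (hy : ∀ p q, p ≤ q → q ≤ N → |dist (y p) (y q) - (q - p : ℝ)| ≤ 1) {g : G} {i j s : ℕ}
    (hs : δ + 4 ≤ s) (hij : i + 4 * s ≤ j) (hjN : j + s ≤ N) (hi : g • y i = y j)
    (his : g • y (i + s) = y (j + s)) : ¬IsOfFinOrder g := by
  have hxw : dist (y (i + s)) (g⁻¹ • y (i + s)) = dist (y (i + s)) (y (j + s)) := by
    rw [← dist_smul g, smul_inv_smul, his, dist_comm]
  have haw : dist (y i) (g⁻¹ • y (i + s)) = dist (y (i + s)) (y j) := by
    rw [← dist_smul g, smul_inv_smul, hi, dist_comm]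
  have hax := hy i (i + s) (by omega) (by omega)
  have hxu := hy (i + s) (j + s) (by omega) hjN
  have hxa := hy (i + s) j (by omega) (by omega)
  have hau := hy i (j + s) (by omega) hjN
  have hij' : (i : ℝ) + 4 * s ≤ j := by exact_mod_cast hij
  push_cast at hax hxu hxa hau
  rw [abs_le] at hax hxu hxa hau
  have hgp := hK.gromovProduct_le_of_abs_dist_sub_le (a := y i) (x := y (i + s))
    (w := g⁻¹ • y (i + s)) (u := g • y (i + s)) (s := s) (t := j - i) (by linarith)
    (abs_le.2 ⟨by linarith, by linarith⟩) (abs_le.2 ⟨by linarith, by linarith⟩)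
    (abs_le.2 ⟨by rw [his]; linarith, by rw [his]; linarith⟩)
    (abs_le.2 ⟨by linarith, by linarith⟩)
    (abs_le.2 ⟨by rw [his]; linarith, by rw [his]; linarith⟩)
  exact hK.not_isOfFinOrder hgp (by rw [his]; linarith)

end IsGromovHyperbolic

end Geometry

section WordBall

open Pointwise

variable {G : Type*} [Group G] [DecidableEq G] {n : ℕ}

def wordBall (gen : Fin n → G) : ℕ → Finset G
  | 0 => {1}
  | R + 1 =>
    insert 1 (Finset.univ.image gen ∪ Finset.univ.image fun i => (gen i)⁻¹) * wordBall gen R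

lemma card_wordBall_le (gen : Fin n → G) (R : ℕ) :
    (wordBall gen R).card ≤ (2 * n + 1) ^ R := by
  induction R with
  | zero => simp [wordBall]
  | succ R ih =>
    have hletters : (insert 1 (Finset.univ.image gen ∪
        Finset.univ.image fun i => (gen i)⁻¹)).card ≤ 2 * n + 1 := by
      grw [Finset.card_insert_le, Finset.card_union_le, Finset.card_image_le,
        Finset.card_image_le, Finset.card_univ, Fintype.card_fin]
      omega
    calc (wordBall gen (R + 1)).card ≤ (2 * n + 1) * (2 * n + 1) ^ R :=
          Finset.card_mul_le.trans (Nat.mul_le_mul hletters ih)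
      _ = (2 * n + 1) ^ (R + 1) := (pow_succ' _ _).symm

lemma wordBall_mono (gen : Fin n → G) : Monotone (wordBall gen) :=
  monotone_nat_of_le_succ fun _ => Finset.subset_mul_right _ (Finset.mem_insert_self 1 _)

lemma list_prod_mem_wordBall (gen : Fin n → G) {m : ℕ} (w : Fin m → G)
    (hw : ∀ i, w i ∈ Set.range gen ∪ (Set.range gen)⁻¹) :
    (List.ofFn w).prod ∈ wordBall gen m := by
  induction m with
  | zero => simp [wordBall]
  | succ m ih =>
    rw [List.ofFn_succ, List.prod_cons]
    refine Finset.mul_mem_mul ?_ (ih _ fun i => hw i.succ)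
    rcases hw 0 with ⟨k, hk⟩ | ⟨k, hk⟩
    · simp [← hk]
    · rw [show w 0 = (gen k)⁻¹ by rw [hk, inv_inv]]
      simp

end WordBall

section WordLength

variable {G : Type} [Group G] {n : ℕ} {gen : Fin n → G}

lemma exists_word_of_closure_eq_top (hgen : Subgroup.closure (Set.range gen) = ⊤) (g : G) :
    ∃ m, ∃ w : Fin m → G,
      (∀ i, w i ∈ Set.range gen ∪ (Set.range gen)⁻¹) ∧ (List.ofFn w).prod = g := by
  have hg : g ∈ Submonoid.closure (Set.range gen ∪ (Set.range gen)⁻¹) := by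
    rw [← Subgroup.closure_toSubmonoid, hgen]
    trivial
  obtain ⟨l, hl, rfl⟩ := Submonoid.exists_list_of_mem_closure hg
  exact ⟨l.length, l.get, fun i => hl _ (l.get_mem i), by rw [List.ofFn_get]⟩

lemma mem_wordBall_of_wordLength_le [DecidableEq G]
    (hgen : Subgroup.closure (Set.range gen) = ⊤) {g : G} {R : ℕ} (h : wordLength gen g ≤ R) :
    g ∈ wordBall gen R := by
  obtain ⟨w, hw, hprod⟩ := Nat.sInf_mem (exists_word_of_closure_eq_top hgen g)
  rw [← hprod]
  exact wordBall_mono gen h (list_prod_mem_wordBall gen w hw)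

lemma mem_wordBall_of_dist_le [DecidableEq G] {K : Type*} [MetricSpace K]
    (hgen : Subgroup.closure (Set.range gen) = ⊤) {ι : G → K}
    (hword : ∀ g g' : G, dist (ι g) (ι g') = wordLength gen (g⁻¹ * g')) {g g' : G} {R : ℕ}
    (h : dist (ι g) (ι g') ≤ R) : g⁻¹ * g' ∈ wordBall gen R :=
  mem_wordBall_of_wordLength_le hgen (by rw [hword] at h; exact_mod_cast h)

end WordLength

theorem exists_lt_mul_inv_mem_centralizer {G : Type*} [Group G] {H : Subgroup G} [Finite H]
    (a b : ℕ → G) {B₁ B₂ : Finset G} {b₁ b₂ M : ℕ}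
    (h₁ : ∀ m ≤ M, ∀ h ∈ H, (a m)⁻¹ * h * a m ∈ B₁) (h₂ : ∀ m ≤ M, (a m)⁻¹ * b m ∈ B₂)
    (hB₁ : B₁.card ≤ b₁) (hB₂ : B₂.card ≤ b₂) (hM : b₁ ^ b₁ * b₂ ≤ M) :
    ∃ i j, i < j ∧ j ≤ M ∧ a j * (a i)⁻¹ ∈ Subgroup.centralizer (H : Set G) ∧
      a j * (a i)⁻¹ * b i = b j := by
  classical
  have := Fintype.ofFinite H
  have hH : Fintype.card H ≤ B₁.card :=
    Finset.card_le_card_of_injOn (fun h : H => (a 0)⁻¹ * h * a 0)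
      (fun h _ => h₁ 0 (Nat.zero_le M) h h.2) (fun h _ h' _ e => Subtype.ext (by simpa using e))
  have hb₁ : 0 < b₁ := (Finset.card_pos.2 ⟨_, h₁ 0 (Nat.zero_le M) 1 H.one_mem⟩).trans_le hB₁
  set data : ℕ → (H → G) × G := fun m => (fun h => (a m)⁻¹ * h * a m, (a m)⁻¹ * b m)
  have hcard :
      ((Fintype.piFinset fun _ : H => B₁) ×ˢ B₂).card < (Finset.range (M + 1)).card := by
    rw [Finset.card_product, Fintype.card_piFinset, Finset.prod_const, Finset.card_univ,
      Finset.card_range]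
    calc B₁.card ^ Fintype.card H * B₂.card ≤ b₁ ^ b₁ * b₂ := by gcongr; omega
      _ < M + 1 := by omega
  obtain ⟨i, hi, j, hj, hne, hij⟩ := Finset.exists_ne_map_eq_of_card_lt_of_maps_to hcard
    (f := data) fun m hm => by
      simp only [Finset.coe_range, Set.mem_Iio, Nat.lt_succ_iff] at hm
      simp [data, h₁ m hm, h₂ m hm]
  have key : ∀ i j, data i = data j →
      a j * (a i)⁻¹ ∈ Subgroup.centralizer (H : Set G) ∧ a j * (a i)⁻¹ * b i = b j := by
    intro i j e
    simp only [data, Prod.mk.injEq, funext_iff] at e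
    refine ⟨Subgroup.mem_centralizer_iff.2 fun h hh => ?_, ?_⟩
    · calc h * (a j * (a i)⁻¹) = a j * ((a j)⁻¹ * h * a j) * (a i)⁻¹ := by group
        _ = a j * ((a i)⁻¹ * h * a i) * (a i)⁻¹ := by rw [e.1 ⟨h, hh⟩]
        _ = a j * (a i)⁻¹ * h := by group
    · rw [mul_assoc, e.2, mul_inv_cancel_left]
  simp only [Finset.mem_range] at hi hj
  rcases hne.lt_or_gt with h | h
  · exact ⟨i, j, h, by omega, key i j hij⟩
  · exact ⟨j, i, h, by omega, key j i hij.symm⟩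

lemma exists_lt_dist_of_ofReal_le_ediam {X : Type*} [PseudoMetricSpace X] {S : Set X}
    {r D : ℝ} (hr : 0 ≤ r) (hrD : r < D) (h : ENNReal.ofReal D ≤ Metric.ediam S) :
    ∃ x ∈ S, ∃ y ∈ S, r < dist x y := by
  by_contra! hle
  have hS : Metric.ediam S ≤ ENNReal.ofReal r := Metric.ediam_le fun x hx y hy => by
    rw [edist_dist]
    exact ENNReal.ofReal_le_ofReal (hle x hx y hy)
  linarith [(ENNReal.ofReal_le_ofReal_iff hr).1 (h.trans hS)]

theorem infinite_centralizer_of_le_dist {G K : Type} [Group G] [MetricSpace K] [MulAction G K]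
    [IsIsometricSMul G K] {δ ε : ℝ} {n : ℕ} (hK : IsGeodesicSpace K) (hδ : HasSlimTriangles δ K)
    {gen : Fin n → G} (hgen : Subgroup.closure (Set.range gen) = ⊤) {ι : G → K}
    (hequiv : ∀ g g' : G, ι (g * g') = g • ι g')
    (hword : ∀ g g' : G, dist (ι g) (ι g') = wordLength gen (g⁻¹ * g'))
    (hdense : ∀ x : K, ∃ g : G, dist x (ι g) ≤ 1 / 2) (H : Subgroup G) [Finite H]
    {s R M : ℕ} (hs : 2 * δ + 4 ≤ s) (hR : 2 * ε + 2 * δ + 1 ≤ R)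
    (hM : ((2 * n + 1) ^ R) ^ (2 * n + 1) ^ R * (2 * n + 1) ^ (s + 1) ≤ M)
    {x₀ x₁ : K} (hx₀ : ∀ h ∈ H, dist (h • x₀) x₀ ≤ ε) (hx₁ : ∀ h ∈ H, dist (h • x₁) x₁ ≤ ε)
    (hL : ((M * (4 * s) + s : ℕ) : ℝ) ≤ dist x₀ x₁) :
    (Subgroup.centralizer (H : Set G) : Set G).Infinite := by
  classical
  obtain ⟨γ, hγ⟩ := hK x₀ x₁
  choose g hg using fun k : ℕ => hdense (γ k)
  set N := M * (4 * s) + s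
  have hy : ∀ p q, p ≤ q → q ≤ N → |dist (ι (g p)) (ι (g q)) - (q - p : ℝ)| ≤ 1 :=
    fun _ _ => hγ.abs_dist_sub_le_one (y := fun k => ι (g k)) hg hL
  have hconj (k : ℕ) (hk : k ≤ N) (h : G) (hh : h ∈ H) :
      (g k)⁻¹ * h * g k ∈ wordBall gen R := by
    have hk' : (k : ℝ) ∈ Set.Icc 0 (dist x₀ x₁) :=
      ⟨k.cast_nonneg, le_trans (by exact_mod_cast hk) hL⟩
    rw [mul_assoc]
    refine mem_wordBall_of_dist_le hgen hword ?_
    rw [hequiv, dist_comm]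
    linarith [dist_smul_le_dist_smul_add h (γ k) (ι (g k)), hg k,
      hδ.dist_smul_geodesic_le hK hγ hk' (hx₀ h hh) (hx₁ h hh)]
  have hstep (k : ℕ) (hk : k + s ≤ N) : (g k)⁻¹ * g (k + s) ∈ wordBall gen (s + 1) := by
    refine mem_wordBall_of_dist_le hgen hword ?_
    have := (abs_le.1 (hy k (k + s) (by omega) hk)).2
    push_cast at this ⊢
    linarith
  have hsample (m : ℕ) (hm : m ≤ M) : m * (4 * s) + s ≤ N := by
    have := Nat.mul_le_mul_right (4 * s) hm
    omega
  obtain ⟨i, j, hij, hjM, hz, hzs⟩ := exists_lt_mul_inv_mem_centralizer (H := H)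
    (fun m => g (m * (4 * s))) (fun m => g (m * (4 * s) + s))
    (fun m hm => hconj _ (by linarith [hsample m hm])) (fun m hm => hstep _ (hsample m hm))
    (card_wordBall_le gen R) (card_wordBall_le gen (s + 1)) hM
  have hinf : ¬IsOfFinOrder (g (j * (4 * s)) * (g (i * (4 * s)))⁻¹) :=
    (hδ.isGromovHyperbolic hK).not_isOfFinOrder_of_smul_eq (N := N) (i := i * (4 * s))
      (j := j * (4 * s)) hy (by linarith) (by nlinarith) (hsample j hjM)
      (by rw [← hequiv, inv_mul_cancel_right]) (by rw [← hequiv, hzs])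
  exact Set.infinite_of_injective_forall_mem (injective_pow_iff_not_isOfFinOrder.2 hinf)
    fun m => pow_mem hz m

theorem stmt9 (δ : ℝ) (n : ℕ) :
    ∃ D : ℝ, ∀ (G K : Type) [Group G] [MetricSpace K] [MulAction G K],
      ∀ (gen : Fin n → G), Subgroup.closure (Set.range gen) = ⊤ →
      ∀ (_hiso : ∀ (g : G) (x y : K), dist (g • x) (g • y) = dist x y)
        (_hfree : ∀ (g : G) (x : K), g • x = x → g = 1)
        (ι : G → K) (_hequiv : ∀ g g' : G, ι (g * g') = g • ι g')
        (_hword : ∀ g g' : G, dist (ι g) (ι g') = wordLength gen (g⁻¹ * g'))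
        (_hdense : ∀ x : K, ∃ g : G, dist x (ι g) ≤ 1 / 2)
        (_geod : ∀ a b : K, ∃ γ : ℝ → K, IsGeodesic a b γ)
        (_thin : ∀ (a b c : K) (γab γbc γac : ℝ → K), IsGeodesic a b γab →
          IsGeodesic b c γbc → IsGeodesic a c γac →
          ∀ s ∈ Set.Icc (0 : ℝ) (dist a c),
            ∃ u ∈ γab '' Set.Icc (0 : ℝ) (dist a b) ∪ γbc '' Set.Icc (0 : ℝ) (dist b c),
              dist (γac s) u ≤ δ)
        (H : Subgroup G), Finite H →
        ENNReal.ofReal D ≤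
          EMetric.diam {x : K | ∀ h ∈ H, ∀ h' ∈ H, dist (h • x) (h' • x) ≤ 6 * δ} →
        (Subgroup.centralizer (H : Set G) : Set G).Infinite := by
  obtain ⟨s, hs⟩ := exists_nat_ge (2 * δ + 4)
  obtain ⟨R, hR⟩ := exists_nat_ge (2 * (6 * δ) + 2 * δ + 1)
  set M := ((2 * n + 1) ^ R) ^ (2 * n + 1) ^ R * (2 * n + 1) ^ (s + 1)
  refine ⟨(M * (4 * s) + s : ℕ) + 1, ?_⟩
  intro G K _ _ _ gen hgen hiso _ ι hequiv hword hdense hK hδ H _ hdiam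
  have : IsIsometricSMul G K := ⟨fun g => Isometry.of_dist_eq (hiso g)⟩
  obtain ⟨x₀, hx₀, x₁, hx₁, hL⟩ :=
    exists_lt_dist_of_ofReal_le_ediam (Nat.cast_nonneg _) (lt_add_one _) hdiam
  have hfix (x : K) (hx : ∀ h ∈ H, ∀ h' ∈ H, dist (h • x) (h' • x) ≤ 6 * δ) (h : G)
      (hh : h ∈ H) : dist (h • x) x ≤ 6 * δ := by
    simpa using hx h hh 1 H.one_mem
  exact infinite_centralizer_of_le_dist hK hδ hgen hequiv hword hdense H hs hR le_rfl
    (hfix x₀ hx₀) (hfix x₁ hx₁) hL.le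
end
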